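/- Let g : ℝ → ℝ be g(θ) = (1+θ)/√(1+θ²). For all reals a, b ≥ 0, |g(a) − g(b)| ≤ |a − b|; that is, g is 1-Lipschitz on [0,∞). -/

import Mathlib

/- On `[0, ∞)` the derivative `g' θ = (1 - θ) / (1 + θ²)^{3/2}` has absolute value at most `1`,
since `|1 - θ| ≤ 1 + θ²` there and `√(1 + θ²) ≥ 1`; the mean value inequality on the convex set
`[0, ∞)` does the rest. -/

noncomputable def g (θ : ℝ) : ℝ := (1 + θ) / Real.sqrt (1 + θ ^ 2)

open Real Set

lemma hasDerivAt_g (x : ℝ) :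
    HasDerivAt g ((1 - x) / (1 + x ^ 2) / √(1 + x ^ 2)) x := by
  have hpos : 0 < 1 + x ^ 2 := by positivity
  have hsqrt : HasDerivAt (fun t : ℝ => √(1 + t ^ 2)) (x / √(1 + x ^ 2)) x := by
    convert ((hasDerivAt_pow 2 x).const_add 1).sqrt hpos.ne' using 1
    ring
  have hquot : HasDerivAt g
      ((1 * √(1 + x ^ 2) - (1 + x) * (x / √(1 + x ^ 2))) / √(1 + x ^ 2) ^ 2) x :=
    ((hasDerivAt_id x).const_add 1).div hsqrt (sqrt_pos.mpr hpos).ne'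
  refine hquot.congr_deriv ?_
  have hsq : √(1 + x ^ 2) ^ 2 = 1 + x ^ 2 := sq_sqrt hpos.le
  field_simp
  linear_combination (x + x ^ 2) * hsq

lemma abs_one_sub_le_one_add_sq {x : ℝ} (hx : 0 ≤ x) : |1 - x| ≤ 1 + x ^ 2 := by
  rcases le_total x 1 with h | h
  · rw [abs_of_nonneg (by linarith)]; nlinarith
  · rw [abs_of_nonpos (by linarith)]; nlinarith

lemma abs_deriv_g_le_one {x : ℝ} (hx : 0 ≤ x) :
    |(1 - x) / (1 + x ^ 2) / √(1 + x ^ 2)| ≤ 1 := by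
  have hpos : 0 < 1 + x ^ 2 := by positivity
  have hsqrt : 1 ≤ √(1 + x ^ 2) := one_le_sqrt.mpr (by nlinarith)
  rw [abs_div, abs_div, abs_of_pos hpos, abs_of_pos (zero_lt_one.trans_le hsqrt)]
  calc |1 - x| / (1 + x ^ 2) / √(1 + x ^ 2) ≤ 1 / 1 :=
        div_le_div₀ zero_le_one (div_le_one_of_le₀ (abs_one_sub_le_one_add_sq hx) hpos.le)
          zero_lt_one hsqrt
    _ = 1 := div_one 1

theorem g_lipschitz_on_nonneg (a b : ℝ) (ha : 0 ≤ a) (hb : 0 ≤ b) :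
    |g a - g b| ≤ |a - b| := by
  simpa only [Real.norm_eq_abs, one_mul] using
    (convex_Ici (0 : ℝ)).norm_image_sub_le_of_norm_hasDerivWithin_le
      (fun x _ => (hasDerivAt_g x).hasDerivWithinAt)
      (fun x hx => (abs_deriv_g_le_one (mem_Ici.mp hx)).trans_eq' (Real.norm_eq_abs _))
      hb ha
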